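/- Soundness of the executable byte write: for every pointer p, symbolic byte b, and configuration σ, either write_b p b σ ∋ UB, or write_b p b σ ∋ write_b^run p b σ. -/
import Mathlib


/-! Executable memory model (instantiated at the concrete address type ℤ)
and its nondeterministic specification. -/

/-- Pointers: an address tagged with a provenance (`Option ℕ`, `none` is the wildcard). -/
structure PtrZ where
  a : ℤ
  pr : Option ℕ
deriving DecidableEq

/-- Memory configurations: a finite memory map, heap block map, frame stack, and
the set of used provenances. -/
structure ConfZ (SByte : Type) where
  mem : Finmap fun _ : ℤ => SByte × Option ℕ
  heap : Finmap fun _ : ℤ => List PtrZ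
  stack : List (List PtrZ)
  used : Finset ℕ

/-- Possible outcomes of a memory operation. -/
inductive ErrUbOom (A : Type) where
  | UB
  | OOM
  | FAIL
  | ok (a : A)

/-- The (nondeterministic, propositional) specification monad. -/
abbrev MemPropT (SByte X : Type) : Type :=
  ConfZ SByte → Set (ErrUbOom (ConfZ SByte × X))

/-- The (deterministic) executable monad. -/
abbrev MemExec (SByte X : Type) : Type :=
  ConfZ SByte → ErrUbOom (ConfZ SByte × X)

/-- `σ.mem[p] ≐ b`: address `p.a` maps to byte `b` with provenance `p.pr`. -/
def readByteAt {SByte : Type} (σ : ConfZ SByte) (p : PtrZ) (b : SByte) : Prop :=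
  σ.mem.lookup p.a = some (b, p.pr)

/-- A pointer is accessible in memory. -/
def accessible {SByte : Type} (σ : ConfZ SByte) (p : PtrZ) : Prop :=
  ∃ b, readByteAt σ p b

/-- Boolean accessibility check (used by the executable implementations). -/
def accessibleB {SByte : Type} (σ : ConfZ SByte) (p : PtrZ) : Bool :=
  match σ.mem.lookup p.a with
  | some (_, pr) => decide (pr = p.pr)
  | none => false

/-- The two memories agree on content and provenance at all addresses except those
of the pointers in `ps`. -/
def memEqExcept {SByte : Type} (σ1 σ2 : ConfZ SByte) (ps : List PtrZ) : Prop :=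
  ∀ (p' : PtrZ) (b : SByte),
    (∀ p ∈ ps, p'.a ≠ p.a) → (readByteAt σ1 p' b ↔ readByteAt σ2 p' b)


/-- Specification of writing a byte: `UB` when the pointer is not accessible;
on success only the memory changes: `p` now maps to `b` and all other addresses are
untouched (and `OOM` is always allowed). -/
def writeSpec {SByte : Type} (p : PtrZ) (b : SByte) : MemPropT SByte Unit :=
  fun σ1 =>
    { beh | beh = .OOM
          ∨ (¬ accessible σ1 p ∧ beh = .UB)
          ∨ ∃ σ2 : ConfZ SByte,
              σ2.heap = σ1.heap ∧ σ2.stack = σ1.stack ∧ σ2.used = σ1.used ∧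
              accessible σ1 p ∧ readByteAt σ2 p b ∧
              memEqExcept σ1 σ2 [p] ∧
              beh = .ok (σ2, ()) }

/-- Executable byte write: a deterministic function mirroring the specification. -/
def writeRun {SByte : Type} (p : PtrZ) (b : SByte) : MemExec SByte Unit :=
  fun σ =>
    match σ.mem.lookup p.a with
    | some (_, pr) =>
        if pr = p.pr then .ok ({ σ with mem := σ.mem.insert p.a (b, p.pr) }, ())
        else .UB
    | none => .UB

/-- Soundness of the executable byte write: for every pointer `p`, byte `b`, and
configuration `σ`, either `write_b p b σ ∋ UB`, or `write_b p b σ ∋ write_b^run p b σ`. -/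
theorem writeRun_sound {SByte : Type} (p : PtrZ) (b : SByte) (σ : ConfZ SByte) :
    ErrUbOom.UB ∈ writeSpec p b σ ∨ writeRun p b σ ∈ writeSpec p b σ := by
  unfold writeRun
  cases h : σ.mem.lookup p.a with
  | none =>
    left
    exact Or.inr (Or.inl ⟨fun ⟨b', hb⟩ => by simp [readByteAt, h] at hb, rfl⟩)
  | some v =>
    obtain ⟨b0, pr⟩ := v
    by_cases hpr : pr = p.pr
    · right
      subst hpr
      simp only [if_pos rfl, if_true]
      refine Or.inr (Or.inr ⟨{ σ with mem := σ.mem.insert p.a (b, p.pr) }, rfl, rfl, rfl,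
        ⟨b0, by simp [readByteAt, h]⟩, ?_, ?_, rfl⟩)
      · simp [readByteAt, Finmap.lookup_insert]
      · intro p' b' hne
        have hne' : p'.a ≠ p.a := hne p (by simp)
        simp [readByteAt, Finmap.lookup_insert_of_ne _ hne']
    · left
      exact Or.inr (Or.inl ⟨fun ⟨b', hb⟩ => by simp [readByteAt, h] at hb; exact hpr hb.2, rfl⟩)
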